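/- Let K_n be the complete graph on a vertex set V of size n. If w is a word representing K_n and the length of w is greater than 2n − 1, then w contains a square. -/

import Mathlib

variable {V : Type*} [DecidableEq V]

/-- Distinct letters `x` and `y` alternate in `w`: deleting all other letters
leaves no two equal consecutive letters. -/
def Alternates (x y : V) (w : List V) : Prop :=
  (w.filter fun z => decide (z = x ∨ z = y)).Chain' (· ≠ ·)

/-- `w` represents the graph `G`: every vertex occurs in `w`, and distinct
vertices alternate in `w` iff they are adjacent in `G`. -/
def Represents (G : SimpleGraph V) (w : List V) : Prop :=
  (∀ v : V, v ∈ w) ∧ ∀ x y : V, x ≠ y → (Alternates x y w ↔ G.Adj x y)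

/-- `w` contains a square. -/
def HasSquare (w : List V) : Prop :=
  ∃ u X v : List V, X ≠ [] ∧ w = u ++ X ++ X ++ v

/-- `w` is square-free. -/
def SqFree (w : List V) : Prop := ¬ HasSquare w

lemma key_no_gap {w : List V} (hrep : Represents (⊤ : SimpleGraph V) w)
    {a c : V} (hac : a ≠ c) {A S B : List V}
    (hw : w = A ++ a :: (S ++ a :: B)) (haS : a ∉ S) (hcS : c ∉ S) : False := by
  have halt : Alternates a c w := (hrep.2 a c hac).mpr (by simp [hac])
  rw [Alternates, hw] at halt
  have hSf : S.filter (fun z => decide (z = a ∨ z = c)) = [] := by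
    rw [List.filter_eq_nil_iff]
    intro z hz
    simp only [decide_eq_true_eq]
    rintro (rfl | rfl)
    · exact haS hz
    · exact hcS hz
  simp only [List.filter_append, List.filter_cons, hSf, eq_self_iff_true, true_or,
    decide_true, if_true, List.nil_append] at halt
  have := (List.isChain_append.mp halt).2.1
  rw [List.isChain_cons_cons] at this
  exact this.1 rfl

lemma exists_first {x : V} {L : List V} (hx : x ∈ L) :
    ∃ S B, L = S ++ x :: B ∧ x ∉ S := by
  induction L with
  | nil => simp at hx
  | cons z T ih =>
    by_cases hz : x = z
    · exact ⟨[], T, by simp [hz], by simp⟩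
    · rcases List.mem_cons.mp hx with h | h
      · exact absurd h hz
      · obtain ⟨S, B, hT, hS⟩ := ih h
        exact ⟨z :: S, B, by simp [hT], by simp [hS, hz]⟩

lemma dup_split {S : List V} (h : ¬ S.Nodup) :
    ∃ S₁ y S₂ S₃, S = S₁ ++ y :: (S₂ ++ y :: S₃) ∧ y ∉ S₂ := by
  induction S with
  | nil => simp at h
  | cons z T ih =>
    by_cases hz : z ∈ T
    · obtain ⟨S₂, S₃, hT, h2⟩ := exists_first hz
      exact ⟨[], z, S₂, S₃, by simp [hT], h2⟩
    · have : ¬ T.Nodup := fun hn => h (List.nodup_cons.mpr ⟨hz, hn⟩)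
      obtain ⟨S₁, y, S₂, S₃, hT, h2⟩ := ih this
      exact ⟨z :: S₁, y, S₂, S₃, by simp [hT], h2⟩

lemma nodup_seg {w : List V} (hrep : Represents (⊤ : SimpleGraph V) w)
    {x : V} {A S C : List V} (hw : w = A ++ x :: (S ++ C)) (hxS : x ∉ S) :
    S.Nodup := by
  by_contra h
  obtain ⟨S₁, y, S₂, S₃, hS, h2⟩ := dup_split h
  have hyS : y ∈ S := by rw [hS]; simp
  have hyx : y ≠ x := fun e => hxS (e ▸ hyS)
  have hxS₂ : x ∉ S₂ := fun hx2 => hxS (by rw [hS]; simp [hx2])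
  refine key_no_gap hrep hyx (A := A ++ x :: S₁) (S := S₂) (B := S₃ ++ C) ?_ h2 hxS₂
  rw [hw, hS]; simp

lemma seg_full {w : List V} (hrep : Represents (⊤ : SimpleGraph V) w)
    {x : V} {A S B : List V} (hw : w = A ++ x :: (S ++ x :: B)) (hxS : x ∉ S) :
    ∀ y, y ≠ x → y ∈ S := by
  intro y hy
  by_contra hyS
  exact key_no_gap hrep (Ne.symm hy) hw hxS hyS

lemma seg_length [Fintype V] {w : List V} (hrep : Represents (⊤ : SimpleGraph V) w)
    {x : V} {A S B : List V} (hw : w = A ++ x :: (S ++ x :: B)) (hxS : x ∉ S) :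
    S.length = Fintype.card V - 1 := by
  have hnd : S.Nodup := nodup_seg hrep (C := x :: B) hw hxS
  have hfin : S.toFinset = Finset.univ.erase x := by
    ext z
    simp only [List.mem_toFinset, Finset.mem_erase, Finset.mem_univ, and_true]
    constructor
    · intro hz
      exact fun e => hxS (e ▸ hz)
    · intro hz
      exact seg_full hrep hw hxS z hz
  rw [← List.toFinset_card_of_nodup hnd, hfin,
    Finset.card_erase_of_mem (Finset.mem_univ x), Finset.card_univ]

lemma main_period [Fintype V] {w : List V} (hrep : Represents (⊤ : SimpleGraph V) w)
    {p : ℕ} (hp : p + Fintype.card V < w.length) :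
    w[p + Fintype.card V]'hp = w[p]'(by omega) := by
  set n := Fintype.card V with hn
  have hpw : p < w.length := by omega
  set x := w[p]'hpw with hx
  have hn1 : 0 < n := Fintype.card_pos_iff.mpr ⟨x⟩
  have hsplit : w = w.take p ++ x :: w.drop (p + 1) := by
    conv_lhs => rw [← List.take_append_drop p w]
    rw [List.drop_eq_getElem_cons hpw]
  set A := w.take p with hA'
  set L := w.drop (p + 1) with hL'
  have hA : A.length = p := by simp [hA', hpw.le]
  have hL : L.length = w.length - (p + 1) := by simp [hL']
  by_cases hxL : x ∈ L
  · obtain ⟨S, B, hLe, hxS⟩ := exists_first hxL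
    have hw2 : w = A ++ x :: (S ++ x :: B) := by rw [hsplit, hLe]
    have hSlen : S.length = n - 1 := seg_length hrep hw2 hxS
    have hw3 : w = (A ++ x :: S) ++ x :: B := by rw [hw2]; simp
    have hlen1 : (A ++ x :: S).length = p + n := by
      simp [hA, hSlen]; omega
    show w[p + n]'hp = x
    rw [List.getElem_of_eq hw3, List.getElem_append_right (by omega)]
    simp [hlen1]
  · have hnd : L.Nodup := nodup_seg hrep (A := A) (x := x) (S := L) (C := [])
      (by rw [List.append_nil]; exact hsplit) hxL
    have hsub : L.toFinset ⊆ Finset.univ.erase x := fun z hz =>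
      Finset.mem_erase.mpr ⟨fun e => hxL (e ▸ List.mem_toFinset.mp hz), Finset.mem_univ z⟩
    have h1 : L.length ≤ n - 1 := by
      rw [← List.toFinset_card_of_nodup hnd]
      calc L.toFinset.card ≤ (Finset.univ.erase x).card := Finset.card_le_card hsub
        _ = n - 1 := by rw [Finset.card_erase_of_mem (Finset.mem_univ x), Finset.card_univ]
    omega

theorem long_word_representing_complete_graph_has_square
    {V : Type*} [DecidableEq V] [Fintype V] [Nonempty V]
    (w : List V) (hrep : Represents (⊤ : SimpleGraph V) w)
    (hlen : 2 * Fintype.card V - 1 < w.length) :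
    HasSquare w := by
  have hn1 : 0 < Fintype.card V := Fintype.card_pos
  set n := Fintype.card V with hn
  have hlen2 : 2 * n ≤ w.length := by omega
  have hgc : ∀ (i j : ℕ) (hi : i < w.length) (hj : j < w.length), i = j →
      w[i]'hi = w[j]'hj := by
    intro i j hi hj hij
    subst hij; rfl
  have hkey : (w.drop n).take n = w.take n := by
    apply List.ext_getElem
    · simp; omega
    · intro i h1 h2
      rw [List.getElem_take, List.getElem_drop, List.getElem_take]
      have hi : i < n := by
        exact (by simpa using h2 : i < n ∧ i < w.length).1
      have hmain := main_period hrep (p := i) (by omega : i + n < w.length)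
      have := hgc (n + i) (i + n) (by omega) (by omega) (by omega)
      rw [this]
      exact hmain
  refine ⟨[], w.take n, w.drop (2 * n), ?_, ?_⟩
  · have hl : (w.take n).length = n := by
      simp; omega
    intro h
    rw [h] at hl
    simp at hl
    omega
  · rw [List.nil_append]
    conv_lhs => rw [← List.take_append_drop n w]
    rw [List.append_assoc]
    congr 1
    conv_lhs => rw [← List.take_append_drop n (w.drop n)]
    rw [hkey, List.drop_drop, show n + n = 2 * n by ring]
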